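/- arXiv:1604.08841 — 3 statements merged into one kernel-verified Lean document; each statement's English description precedes it below -/
import Mathlib

section
/- Let A ⊆ ℝ^d have positive reach, and for 1 ≤ k ≤ d let H^k(A) be the set of all a ∈ A such that the normal cone Nor(A, a) contains a k-dimensional halfspace (i.e. a set of the form {w + t v : w ∈ W, t ≥ 0} for some (k−1)-dimensional subspace W and unit vector v ⊥ W). Then H^k(A) is closed. -/
open Metric Set Filter
open scoped ENNReal RealInnerProductSpace Topology NNReal

noncomputable section

variable {E : Type*} [NormedAddCommGroup E] [InnerProductSpace ℝ E]

/-- `x` has a unique nearest point in `A`. -/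
def UnpPt (A : Set E) (x : E) : Prop :=
  ∃! a, a ∈ A ∧ dist x a = Metric.infDist x A

/-- The reach of `A` at a point `a` (Federer). -/
def locReach (A : Set E) (a : E) : ℝ≥0∞ :=
  ⨆ (r : ℝ≥0) (_ : ∀ x : E, dist x a < (r : ℝ) → UnpPt A x), (r : ℝ≥0∞)

/-- The (global) reach of `A`. -/
def setReach (A : Set E) : ℝ≥0∞ := ⨅ a ∈ A, locReach A a

/-- The tangent cone of `A` at `a` in the sense of Federer. -/
def Tan (A : Set E) (a : E) : Set E :=
  {u | u = 0 ∨ ∃ (x : ℕ → E) (r : ℕ → ℝ),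
    (∀ i, x i ∈ A ∧ x i ≠ a ∧ 0 < r i) ∧
    Tendsto x atTop (nhds a) ∧
    Tendsto (fun i => r i • (x i - a)) atTop (nhds u)}

/-- The normal cone of `A` at `a`: the dual cone of the tangent cone. -/
def Nor (A : Set E) (a : E) : Set E :=
  {u | ∀ v ∈ Tan A a, ⟪u, v⟫ ≤ 0}

/-!
If every point at distance `< r` from `A` has a unique nearest point, then
`v ∈ Nor A a ↔ ∀ c ∈ A, r ⟪v, c - a⟫ ≤ ‖v‖ ‖c - a‖²` (Federer). Hence the normal bundle
`{(a, v) | v ∈ Nor A a}` is closed, and so is the set of `a` admitting an orthonormal frame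
`(F, v)` whose halfspace lies in `Nor A a`, since frames range over a compact set.

For the quadratic bound, push a point `x` straight away from its nearest point `p`: the distance
to `A` grows at unit rate up to `r` (short steps lose little, as the nearest-point map is uniformly
continuous near `x`), so the ball of radius `s < r` touching `A` at `p` in direction `x - p` misses
`A`. A normal vector `v` at `a` is a limit of such proximal normals, taken at the nearest points
of `a + t v` as `t → 0`.
-/

section NormedGroup

variable {X : Type*} [NormedAddCommGroup X] {A : Set X} {r : ℝ}

def UnpWithin (A : Set X) (r : ℝ) : Prop :=
  ∀ x, infDist x A < r → UnpPt A x

open scoped Classical in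
def nearestPt (A : Set X) (x : X) : X :=
  if h : ∃ y ∈ A, infDist x A = dist x y then h.choose else x

lemma exists_unpWithin_of_setReach_pos (hreach : 0 < setReach A) (hne : A.Nonempty) :
    ∃ r > 0, UnpWithin A r := by
  obtain ⟨c, hc0, hc⟩ := ENNReal.lt_iff_exists_nnreal_btwn.1 hreach
  refine ⟨c, by exact_mod_cast hc0, fun x hx => ?_⟩
  obtain ⟨a, ha, hxa⟩ := (infDist_lt_iff hne).1 hx
  have hca : (c : ℝ≥0∞) < locReach A a := hc.trans_le (iInf₂_le a ha)
  obtain ⟨r', hr'⟩ := lt_iSup_iff.1 hca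
  obtain ⟨hunp, hcr'⟩ := lt_iSup_iff.1 hr'
  exact hunp x (hxa.trans (by exact_mod_cast hcr'))

lemma UnpWithin.nonempty (hU : UnpWithin A r) (hr : 0 < r) : A.Nonempty := by
  by_contra hA
  rw [not_nonempty_iff_eq_empty] at hA
  obtain ⟨a, ⟨ha, -⟩, -⟩ := hU 0 (by simpa [hA] using hr)
  simp [hA] at ha

lemma UnpWithin.isClosed (hU : UnpWithin A r) (hr : 0 < r) : IsClosed A := by
  refine isClosed_of_closure_subset fun x hx => ?_
  have hx0 : infDist x A = 0 := (mem_closure_iff_infDist_zero (hU.nonempty hr)).1 hx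
  obtain ⟨a, ⟨ha, hxa⟩, -⟩ := hU x (hx0 ▸ hr)
  rwa [dist_eq_zero.1 (hxa.trans hx0)]

variable [ProperSpace X]

lemma nearestPt_mem (hne : A.Nonempty) (hAc : IsClosed A) (x : X) : nearestPt A x ∈ A := by
  have h := hAc.exists_infDist_eq_dist hne x
  rw [nearestPt, dif_pos h]
  exact h.choose_spec.1

lemma dist_nearestPt (hne : A.Nonempty) (hAc : IsClosed A) (x : X) :
    dist x (nearestPt A x) = infDist x A := by
  have h := hAc.exists_infDist_eq_dist hne x
  rw [nearestPt, dif_pos h]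
  exact h.choose_spec.2.symm

lemma norm_sub_nearestPt (hne : A.Nonempty) (hAc : IsClosed A) (x : X) :
    ‖x - nearestPt A x‖ = infDist x A := by
  rw [← dist_eq_norm, dist_nearestPt hne hAc]

lemma UnpWithin.eq_nearestPt (hU : UnpWithin A r) {x b : X} (hx : infDist x A < r)
    (hb : b ∈ A) (hxb : dist x b = infDist x A) : b = nearestPt A x := by
  have hr : 0 < r := infDist_nonneg.trans_lt hx
  obtain ⟨_, -, huniq⟩ := hU x hx
  rw [huniq b ⟨hb, hxb⟩, huniq _ ⟨nearestPt_mem (hU.nonempty hr) (hU.isClosed hr) x,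
    dist_nearestPt (hU.nonempty hr) (hU.isClosed hr) x⟩]

/-- A cluster point of nearest points of `y → x` is a nearest point of `x`, hence the
nearest point. -/
lemma UnpWithin.continuousOn_nearestPt (hU : UnpWithin A r) :
    ContinuousOn (nearestPt A) {x | infDist x A < r} := by
  intro x hx
  have hr : 0 < r := infDist_nonneg.trans_lt hx
  have hne := hU.nonempty hr
  have hAc := hU.isClosed hr
  have hdist (y x : X) : dist (nearestPt A y) x ≤ infDist x A + 2 * dist y x := by
    have := dist_triangle (nearestPt A y) y x
    rw [dist_comm (nearestPt A y) y, dist_nearestPt hne hAc] at this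
    linarith [infDist_le_infDist_add_dist (x := y) (y := x) (s := A)]
  refine (isCompact_closedBall x (infDist x A + 2)).tendsto_nhds_of_unique_mapClusterPt ?_ ?_
  · filter_upwards [nhdsWithin_le_nhds (ball_mem_nhds x one_pos)] with y hy
    rw [mem_closedBall]
    linarith [hdist y x, mem_ball.1 hy]
  · intro c _ hc
    have hcA : c ∈ A := by
      by_contra hcA
      obtain ⟨y, hy⟩ := (hc.frequently (hAc.isOpen_compl.mem_nhds hcA)).exists
      exact hy (nearestPt_mem hne hAc y)
    refine hU.eq_nearestPt hx hcA (le_antisymm (le_of_forall_pos_le_add fun ε hε => ?_)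
      (infDist_le_dist_of_mem hcA))
    have hε3 : 0 < ε / 3 := by positivity
    obtain ⟨y, hyc, hyx⟩ := ((hc.frequently (ball_mem_nhds c hε3)).and_eventually
      (nhdsWithin_le_nhds (ball_mem_nhds x hε3))).exists
    linarith [hdist y x, dist_comm x c, dist_triangle c (nearestPt A y) x,
      dist_comm c (nearestPt A y)]

end NormedGroup

def pushAway (A : Set E) (h : ℝ) (x : E) : E :=
  x + (h / infDist x A) • (x - nearestPt A x)

section PushAway

variable {A : Set E} {r : ℝ}

lemma two_inner_le_norm_sq_of_norm_le_infDist {x p c : E} (hx : ‖x - p‖ ≤ infDist x A)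
    (hc : c ∈ A) : 2 * ⟪x - p, c - p⟫ ≤ ‖c - p‖ ^ 2 := by
  have hxc : ‖x - p‖ ≤ ‖x - c‖ := hx.trans (dist_eq_norm x c ▸ infDist_le_dist_of_mem hc)
  have hsplit : ‖x - c‖ ^ 2 = ‖x - p‖ ^ 2 - 2 * ⟪x - p, c - p⟫ + ‖c - p‖ ^ 2 := by
    rw [show x - c = (x - p) - (c - p) by abel, norm_sub_sq_real]
  nlinarith [norm_nonneg (x - p)]

lemma eq_smul_of_add_le_norm_add {u w : E} {ε H : ℝ} (hu : ‖u‖ ≤ ε) (hw : ‖w‖ = H)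
    (hH : 0 < H) (h : H + ε ≤ ‖u + w‖) : u = (ε / H) • w := by
  have hnorm : ‖u + w‖ = ‖u‖ + ‖w‖ := le_antisymm (norm_add_le u w) (by linarith)
  have hε : ‖u‖ = ε := by linarith [norm_add_le u w]
  have hray := (sameRay_iff_norm_add.2 hnorm).norm_smul_eq
  rw [hε, hw] at hray
  rw [div_eq_inv_mul, mul_smul, hray, smul_smul, inv_mul_cancel₀ hH.ne', one_smul]

variable [ProperSpace E]

lemma dist_pushAway (hne : A.Nonempty) (hAc : IsClosed A) {x : E} (hx : 0 < infDist x A)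
    {h : ℝ} (hh : 0 ≤ h) : dist (pushAway A h x) x = h := by
  rw [pushAway, dist_eq_norm, add_sub_cancel_left, norm_smul, norm_sub_nearestPt hne hAc,
    Real.norm_eq_abs, abs_of_nonneg (by positivity), div_mul_cancel₀ _ hx.ne']

lemma add_sub_le_of_sq_sub_le {D H h η δ : ℝ} (hH : 0 < H) (hHD : H ≤ D) (hh : 0 ≤ h)
    (hη : 0 ≤ η) (hηH : η ≤ H) (hδ : 0 ≤ δ) (hsq : (D + h) ^ 2 - h / D * η ^ 2 ≤ δ ^ 2) :
    D + h - h * η ^ 2 / H ^ 2 ≤ δ := by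
  have hD : 0 < D := hH.trans_le hHD
  set e := h * η ^ 2 / H ^ 2
  have he : e ≤ h := by
    rw [div_le_iff₀ (by positivity)]
    exact mul_le_mul_of_nonneg_left (pow_le_pow_left₀ hη hηH 2) hh
  have hDe : h / D * η ^ 2 ≤ 2 * D * e := by
    have : 1 / D ≤ 2 * D / H ^ 2 := by
      rw [div_le_div_iff₀ hD (by positivity)]
      nlinarith
    calc h / D * η ^ 2 = h * η ^ 2 * (1 / D) := by ring
      _ ≤ h * η ^ 2 * (2 * D / H ^ 2) := mul_le_mul_of_nonneg_left this (by positivity)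
      _ = 2 * D * e := by ring
  have hsq' : (D + h - e) ^ 2 ≤ δ ^ 2 := by
    nlinarith [mul_nonneg (by positivity : 0 ≤ e) (by linarith : 0 ≤ 2 * h - e)]
  exact (pow_le_pow_iff_left₀ (by linarith) hδ two_ne_zero).1 hsq'

/-- The new nearest point `c` is within `η` of the old one `p`, and
`2 ⟪x - p, c - p⟫ ≤ ‖c - p‖²` bounds what the step loses to the move from `p` to `c`. -/
lemma le_infDist_pushAway (hne : A.Nonempty) (hAc : IsClosed A) {x : E} {H h η : ℝ}
    (hH : 0 < H) (hHx : H ≤ infDist x A) (hh : 0 < h) (hη : 0 ≤ η) (hηH : η ≤ H)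
    (hclose : dist (nearestPt A (pushAway A h x)) (nearestPt A x) < η) :
    infDist x A + h - h * η ^ 2 / H ^ 2 ≤ infDist (pushAway A h x) A := by
  set D := infDist x A
  set p := nearestPt A x
  set c := nearestPt A (pushAway A h x)
  have hD : 0 < D := hH.trans_le hHx
  have hxp : ‖x - p‖ = D := norm_sub_nearestPt hne hAc x
  have hcA : c ∈ A := nearestPt_mem hne hAc _
  have hxc : D ≤ ‖x - c‖ := dist_eq_norm x c ▸ infDist_le_dist_of_mem hcA
  have hprox : 2 * ⟪x - p, c - p⟫ ≤ ‖c - p‖ ^ 2 :=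
    two_inner_le_norm_sq_of_norm_le_infDist hxp.le hcA
  have hcp : ‖c - p‖ ^ 2 ≤ η ^ 2 := by
    rw [← dist_eq_norm]
    exact pow_le_pow_left₀ dist_nonneg hclose.le 2
  have hexp : pushAway A h x - c = (x - c) + (h / D) • (x - p) := by
    rw [pushAway]
    abel
  have hinner : ⟪x - c, x - p⟫ = D ^ 2 - ⟪x - p, c - p⟫ := by
    rw [show x - c = (x - p) - (c - p) by abel, inner_sub_left, real_inner_self_eq_norm_sq,
      hxp, real_inner_comm]
  refine add_sub_le_of_sq_sub_le hH hHx hh.le hη hηH infDist_nonneg ?_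
  rw [← norm_sub_nearestPt hne hAc, hexp, norm_add_sq_real, real_inner_smul_right, norm_smul,
    Real.norm_eq_abs, abs_of_pos (by positivity), hxp, hinner, div_mul_cancel₀ h hD.ne']
  have hloss : h / D * (2 * ⟪x - p, c - p⟫) ≤ h / D * η ^ 2 :=
    mul_le_mul_of_nonneg_left (by linarith) (by positivity)
  have hhD : h / D * D ^ 2 = h * D := by field_simp
  nlinarith [pow_le_pow_left₀ hD.le hxc 2]

lemma iterate_pushAway_dist_le_and_le_infDist (hne : A.Nonempty) (hAc : IsClosed A) {x : E}
    {H ε h η τ : ℝ} (hH : 0 < H) (hx : infDist x A = H) (hh : 0 < h) (hhτ : h < τ) (hη : 0 ≤ η)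
    (hηH : η ≤ H)
    (hmod : ∀ y ∈ closedBall x ε, ∀ z ∈ closedBall x ε, dist y z < τ →
      dist (nearestPt A y) (nearestPt A z) < η) (k : ℕ) (hk : k * h ≤ ε) :
    dist ((pushAway A h)^[k] x) x ≤ k * h ∧
      H + k * (h - h * η ^ 2 / H ^ 2) ≤ infDist ((pushAway A h)^[k] x) A := by
  induction k with
  | zero => simp [hx]
  | succ k ih =>
    push_cast at hk
    obtain ⟨hdist, hgain⟩ := ih (by linarith)
    set y := (pushAway A h)^[k] x
    rw [Function.iterate_succ_apply']
    have hloss : h * η ^ 2 / H ^ 2 ≤ h := by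
      rw [div_le_iff₀ (by positivity)]
      exact mul_le_mul_of_nonneg_left (pow_le_pow_left₀ hη hηH 2) hh.le
    have hHy : H ≤ infDist y A := by
      nlinarith [mul_nonneg k.cast_nonneg (sub_nonneg.2 hloss)]
    have hstep : dist (pushAway A h y) y = h := dist_pushAway hne hAc (hH.trans_le hHy) hh.le
    have hnext : dist (pushAway A h y) x ≤ (k + 1) * h := by
      linarith [dist_triangle (pushAway A h y) y x]
    have hclose := hmod _ (mem_closedBall.2 (hnext.trans hk)) y
      (mem_closedBall.2 (by linarith)) (by rw [hstep]; exact hhτ)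
    have hgain' := le_infDist_pushAway hne hAc hH hHy hh hη hηH hclose
    push_cast
    constructor <;> linarith

lemma UnpWithin.exists_mem_closedBall_le_infDist (hU : UnpWithin A r) {x : E} {ε η : ℝ}
    (hx : 0 < infDist x A) (hε : 0 < ε) (hxε : infDist x A + ε < r) (hη : 0 < η)
    (hηx : η ≤ infDist x A) :
    ∃ z ∈ closedBall x ε, infDist x A + ε * (1 - η ^ 2 / infDist x A ^ 2) ≤ infDist z A := by
  have hr : 0 < r := by linarith
  have hball : closedBall x ε ⊆ {y | infDist y A < r} := fun y hy => show infDist y A < r by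
    linarith [infDist_le_infDist_add_dist (x := y) (y := x) (s := A), mem_closedBall.1 hy]
  have hUC := (isCompact_closedBall x ε).uniformContinuousOn_of_continuous
    (hU.continuousOn_nearestPt.mono hball)
  obtain ⟨τ, hτ, hmod⟩ := Metric.uniformContinuousOn_iff.1 hUC η hη
  obtain ⟨N, hN⟩ := exists_nat_gt (ε / τ)
  have hN0 : (0 : ℝ) < N := (div_pos hε hτ).trans hN
  have hNh : (N : ℝ) * (ε / N) = ε := mul_div_cancel₀ ε hN0.ne'
  have hhτ : ε / N < τ := by rwa [div_lt_iff₀ hN0, mul_comm, ← div_lt_iff₀ hτ]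
  obtain ⟨hdist, hgain⟩ := iterate_pushAway_dist_le_and_le_infDist (hU.nonempty hr)
    (hU.isClosed hr) hx rfl (by positivity) hhτ hη.le hηx hmod N hNh.le
  refine ⟨_, mem_closedBall.2 (hdist.trans hNh.le), le_of_eq_of_le ?_ hgain⟩
  field_simp

lemma UnpWithin.exists_mem_closedBall_add_le_infDist (hU : UnpWithin A r) {x : E} {ε : ℝ}
    (hx : 0 < infDist x A) (hε : 0 < ε) (hxε : infDist x A + ε < r) :
    ∃ z ∈ closedBall x ε, infDist x A + ε ≤ infDist z A := by
  obtain ⟨z, hz, hmax⟩ := (isCompact_closedBall x ε).exists_isMaxOn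
    (nonempty_closedBall.2 hε.le) (continuous_infDist_pt A).continuousOn
  have hlim : Tendsto (fun η => infDist x A + ε * (1 - η ^ 2 / infDist x A ^ 2)) (𝓝[>] 0)
      (𝓝 (infDist x A + ε)) :=
    ((by fun_prop : Continuous fun η : ℝ => infDist x A + ε * (1 - η ^ 2 / infDist x A ^ 2)
      ).tendsto' 0 _ (by simp)).mono_left nhdsWithin_le_nhds
  refine ⟨z, hz, le_of_tendsto hlim ?_⟩
  filter_upwards [Ioc_mem_nhdsGT hx] with η hη
  obtain ⟨y, hy, hle⟩ := hU.exists_mem_closedBall_le_infDist hx hε hxε hη.1 hη.2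
  exact hle.trans (hmax hy)

/-- The point of the ball of radius `ε` around `x` farthest from `A` is at distance
`infDist x A + ε`, which the triangle inequality allows only on the ray from the nearest point. -/
lemma UnpWithin.infDist_pushAway (hU : UnpWithin A r) {x : E} {ε : ℝ} (hx : 0 < infDist x A)
    (hε : 0 < ε) (hxε : infDist x A + ε < r) :
    infDist (pushAway A ε x) A = infDist x A + ε := by
  have hr : 0 < r := by linarith
  have hne := hU.nonempty hr
  have hAc := hU.isClosed hr
  obtain ⟨z, hz, hle⟩ := hU.exists_mem_closedBall_add_le_infDist hx hε hxε
  have hfar : infDist x A + ε ≤ ‖(z - x) + (x - nearestPt A x)‖ := by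
    rw [sub_add_sub_cancel, ← dist_eq_norm]
    exact hle.trans (infDist_le_dist_of_mem (nearestPt_mem hne hAc x))
  have hz_eq : z = pushAway A ε x := by
    rw [pushAway, ← eq_smul_of_add_le_norm_add (mem_closedBall_iff_norm.1 hz)
      (norm_sub_nearestPt hne hAc x) hx hfar]
    abel
  have hnear := infDist_le_infDist_add_dist (x := z) (y := x) (s := A)
  rw [← hz_eq]
  exact le_antisymm (by linarith [mem_closedBall.1 hz]) hle

lemma UnpWithin.two_mul_inner_sub_nearestPt_le (hU : UnpWithin A r) {x c : E} {s : ℝ}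
    (hxs : infDist x A < s) (hsr : s < r) (hc : c ∈ A) :
    2 * s * ⟪x - nearestPt A x, c - nearestPt A x⟫ ≤
      ‖x - nearestPt A x‖ * ‖c - nearestPt A x‖ ^ 2 := by
  have hr : 0 < r := infDist_nonneg.trans_lt (hxs.trans hsr)
  have hxp := norm_sub_nearestPt (hU.nonempty hr) (hU.isClosed hr) x
  rcases (infDist_nonneg (x := x) (s := A)).eq_or_lt with hH | hH
  · simp [norm_eq_zero.1 (hxp.trans hH.symm)]
  set p := nearestPt A x
  set y := pushAway A (s - infDist x A) x with hy_def
  have hyp : y - p = (s / infDist x A) • (x - p) := by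
    rw [hy_def, pushAway, add_sub_right_comm,
      show s / infDist x A = 1 + (s - infDist x A) / infDist x A by field_simp; ring,
      add_smul, one_smul]
  have hy : ‖y - p‖ ≤ infDist y A := by
    rw [hU.infDist_pushAway hH (sub_pos.2 hxs) (by linarith), hyp, norm_smul, hxp,
      Real.norm_eq_abs, abs_of_pos (div_pos (hH.trans hxs) hH), div_mul_cancel₀ _ hH.ne']
    linarith
  have hprox := two_inner_le_norm_sq_of_norm_le_infDist hy hc
  rw [hyp, real_inner_smul_left] at hprox
  rw [hxp]
  calc 2 * s * ⟪x - p, c - p⟫ = infDist x A * (2 * (s / infDist x A * ⟪x - p, c - p⟫)) := by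
        field_simp
    _ ≤ infDist x A * ‖c - p‖ ^ 2 := mul_le_mul_of_nonneg_left hprox hH.le

end PushAway

section NormalCone

variable {A : Set E} {r : ℝ}

lemma mem_tan_of_tendsto_smul_sub {a u : E} {b : ℕ → E} {ρ : ℕ → ℝ} (hb : ∀ n, b n ∈ A)
    (hρ : ∀ n, 0 < ρ n) (hba : Tendsto b atTop (𝓝 a))
    (hu : Tendsto (fun n => ρ n • (b n - a)) atTop (𝓝 u)) : u ∈ Tan A a := by
  rcases eq_or_ne u 0 with rfl | hu0
  · exact Or.inl rfl
  obtain ⟨N, hN⟩ := eventually_atTop.1 (hu.eventually_ne hu0)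
  refine Or.inr ⟨fun i => b (i + N), fun i => ρ (i + N), fun i => ⟨hb _, fun h => ?_, hρ _⟩,
    (tendsto_add_atTop_iff_nat N).2 hba, (tendsto_add_atTop_iff_nat N).2 hu⟩
  exact hN (i + N) (Nat.le_add_left N i) (by simp [h])

lemma eq_of_norm_le_of_inner_sub_nonpos {d v : E} (hd : ‖d‖ ≤ ‖v‖) (h : ⟪v, v - d⟫ ≤ 0) :
    d = v := by
  rw [inner_sub_right, real_inner_self_eq_norm_sq] at h
  have : ‖d - v‖ ^ 2 ≤ 0 := by
    rw [norm_sub_sq_real, real_inner_comm]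
    nlinarith [norm_nonneg d]
  exact sub_eq_zero.1 (norm_eq_zero.1 (by nlinarith [norm_nonneg (d - v)]))

lemma mem_nor_of_forall_inner_le {a v : E} {C : ℝ} (h : ∀ c ∈ A, ⟪v, c - a⟫ ≤ C * ‖c - a‖ ^ 2) :
    v ∈ Nor A a := by
  rintro u (rfl | ⟨x, ρ, hx, hxa, hu⟩)
  · simp
  have hnorm : Tendsto (fun i => ‖x i - a‖) atTop (𝓝 0) := by
    simpa using (hxa.sub_const a).norm
  have hbound : Tendsto (fun i => C * (‖ρ i • (x i - a)‖ * ‖x i - a‖)) atTop (𝓝 (C * (‖u‖ * 0))) :=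
    tendsto_const_nhds.mul (hu.norm.mul hnorm)
  refine le_of_tendsto_of_tendsto' (tendsto_const_nhds.inner hu) (by simpa using hbound) fun i => ?_
  have hρ := (hx i).2.2
  rw [real_inner_smul_right, norm_smul, Real.norm_eq_abs, abs_of_pos hρ]
  nlinarith [mul_le_mul_of_nonneg_left (h (x i) (hx i).1) hρ.le]

lemma eq_of_tendsto_of_mem_nor {a v d₀ : E} (hv : v ∈ Nor A a) {b d : ℕ → E} {t : ℕ → ℝ}
    (hb : ∀ n, b n ∈ A) (ht : ∀ n, 0 < t n) (hba : Tendsto b atTop (𝓝 a))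
    (hbd : ∀ n, b n - a = t n • (v - d n)) (hd₀ : ‖d₀‖ ≤ ‖v‖) (hd : Tendsto d atTop (𝓝 d₀)) :
    d₀ = v := by
  have htan : v - d₀ ∈ Tan A a := by
    refine mem_tan_of_tendsto_smul_sub hb (fun n => inv_pos.2 (ht n)) hba ?_
    refine ((tendsto_const_nhds (x := v)).sub hd).congr fun n => ?_
    rw [hbd, inv_smul_smul₀ (ht n).ne']
  exact eq_of_norm_le_of_inner_sub_nonpos hd₀ (hv _ htan)

/-- `v` is a limit of the rescaled proximal normals `d = (a + t v - b) / t`, where `b` is the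
nearest point of `a + t v` and `t → 0`. -/
lemma UnpWithin.two_mul_inner_le_of_mem_nor [ProperSpace E] (hU : UnpWithin A r) {a v c : E}
    {s : ℝ} (hs : 0 < s) (hsr : s < r) (ha : a ∈ A) (hv : v ∈ Nor A a) (hc : c ∈ A) :
    2 * s * ⟪v, c - a⟫ ≤ ‖v‖ * ‖c - a‖ ^ 2 := by
  have hne : A.Nonempty := ⟨a, ha⟩
  have hAc := hU.isClosed (hs.trans hsr)
  set t : ℕ → ℝ := fun n => 1 / ((n : ℝ) + 1)
  have ht (n : ℕ) : 0 < t n := by positivity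
  set b : ℕ → E := fun n => nearestPt A (a + t n • v)
  set d : ℕ → E := fun n => (t n)⁻¹ • (a + t n • v - b n)
  have hbd (n : ℕ) : b n - a = t n • (v - d n) := by
    simp only [d, smul_sub, smul_smul, mul_inv_cancel₀ (ht n).ne', one_smul]
    abel
  have hdist (n : ℕ) : infDist (a + t n • v) A ≤ t n * ‖v‖ := by
    calc infDist (a + t n • v) A ≤ dist (a + t n • v) a := infDist_le_dist_of_mem ha
      _ = t n * ‖v‖ := by rw [dist_eq_norm, add_sub_cancel_left, norm_smul_of_nonneg (ht n).le]
  have hd (n : ℕ) : ‖d n‖ ≤ ‖v‖ := by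
    rw [norm_smul_of_nonneg (inv_pos.2 (ht n)).le, norm_sub_nearestPt hne hAc,
      inv_mul_le_iff₀ (ht n)]
    exact hdist n
  obtain ⟨d₀, hd₀, φ, hφ, hdφ⟩ := (isCompact_closedBall (0 : E) ‖v‖).tendsto_subseq
    fun n => mem_closedBall_zero_iff.2 (hd n)
  have htφ : Tendsto (fun n => t (φ n)) atTop (𝓝 0) :=
    tendsto_one_div_add_atTop_nhds_zero_nat.comp hφ.tendsto_atTop
  have hbφ : Tendsto (fun n => b (φ n)) atTop (𝓝 a) := by
    have := (htφ.smul ((tendsto_const_nhds (x := v)).sub hdφ)).const_add a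
    rw [zero_smul, add_zero] at this
    refine this.congr fun n => ?_
    rw [Function.comp_apply, ← hbd, add_sub_cancel]
  have hd₀v : d₀ = v := eq_of_tendsto_of_mem_nor hv (fun n => nearestPt_mem hne hAc _)
    (fun n => ht (φ n)) hbφ (fun n => hbd (φ n)) (mem_closedBall_zero_iff.1 hd₀) hdφ
  have hineq : ∀ᶠ n in atTop,
      2 * s * ⟪d (φ n), c - b (φ n)⟫ ≤ ‖d (φ n)‖ * ‖c - b (φ n)‖ ^ 2 := by
    filter_upwards [(htφ.mul_const ‖v‖).eventually (gt_mem_nhds (by simpa using hs))] with n hn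
    have hprox := hU.two_mul_inner_sub_nearestPt_le ((hdist (φ n)).trans_lt hn) hsr hc
    have hinv := (inv_pos.2 (ht (φ n))).le
    simp only [d, real_inner_smul_left, norm_smul_of_nonneg hinv]
    calc 2 * s * ((t (φ n))⁻¹ * ⟪a + t (φ n) • v - b (φ n), c - b (φ n)⟫)
        = (t (φ n))⁻¹ * (2 * s * ⟪a + t (φ n) • v - b (φ n), c - b (φ n)⟫) := by ring
      _ ≤ (t (φ n))⁻¹ * (‖a + t (φ n) • v - b (φ n)‖ * ‖c - b (φ n)‖ ^ 2) :=
        mul_le_mul_of_nonneg_left hprox hinv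
      _ = _ := by ring
  rw [← hd₀v]
  refine le_of_tendsto_of_tendsto ?_ ?_ hineq
  · exact tendsto_const_nhds.mul (hdφ.inner (tendsto_const_nhds.sub hbφ))
  · exact hdφ.norm.mul ((tendsto_const_nhds.sub hbφ).norm.pow 2)

lemma UnpWithin.mem_nor_iff [ProperSpace E] (hU : UnpWithin A r) (hr : 0 < r) {a v : E}
    (ha : a ∈ A) : v ∈ Nor A a ↔ ∀ c ∈ A, r * ⟪v, c - a⟫ ≤ ‖v‖ * ‖c - a‖ ^ 2 := by
  refine ⟨fun hv c hc => ?_, fun h => mem_nor_of_forall_inner_le (C := ‖v‖ / r) fun c hc => ?_⟩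
  · calc r * ⟪v, c - a⟫ = 2 * (r / 2) * ⟪v, c - a⟫ := by ring
      _ ≤ ‖v‖ * ‖c - a‖ ^ 2 :=
        hU.two_mul_inner_le_of_mem_nor (half_pos hr) (half_lt_self hr) ha hv hc
  · rw [div_mul_eq_mul_div, le_div_iff₀ hr, mul_comm]
    exact h c hc

lemma UnpWithin.isClosed_setOf_mem_nor [ProperSpace E] (hU : UnpWithin A r) (hr : 0 < r) :
    IsClosed {p : E × E | p.1 ∈ A ∧ p.2 ∈ Nor A p.1} := by
  have hset : {p : E × E | p.1 ∈ A ∧ p.2 ∈ Nor A p.1} =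
      {p | p.1 ∈ A} ∩ ⋂ c ∈ A, {p | r * ⟪p.2, c - p.1⟫ ≤ ‖p.2‖ * ‖c - p.1‖ ^ 2} := by
    ext p
    simpa using and_congr_right (hU.mem_nor_iff hr (a := p.1) (v := p.2))
  rw [hset]
  exact ((hU.isClosed hr).preimage continuous_fst).inter
    (isClosed_biInter fun c _ => isClosed_le (by fun_prop) (by fun_prop))

end NormalCone

lemma isClosed_setOf_exists_of_isCompact {X Y : Type*} [TopologicalSpace X] [TopologicalSpace Y]
    {K : Set Y} (hK : IsCompact K) {S : Set (X × Y)} (hS : IsClosed S) :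
    IsClosed {x | ∃ y ∈ K, (x, y) ∈ S} := by
  have := isCompact_iff_compactSpace.1 hK
  have hset : {x | ∃ y ∈ K, (x, y) ∈ S} =
      Prod.fst '' ((fun q : X × K => (q.1, (q.2 : Y))) ⁻¹' S) := by
    ext x
    simp
  rw [hset]
  exact isClosedMap_fst_of_compactSpace _ (hS.preimage (by fun_prop))

lemma exists_halfspace_subset_iff_exists_orthonormal [FiniteDimensional ℝ E] {S : Set E}
    {m : ℕ} :
    (∃ (W : Submodule ℝ E) (v : E), Module.finrank ℝ W = m ∧ ‖v‖ = 1 ∧ (∀ w ∈ W, ⟪w, v⟫ = 0) ∧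
        {x : E | ∃ w ∈ W, ∃ t : ℝ, 0 ≤ t ∧ x = w + t • v} ⊆ S) ↔
      ∃ (F : Fin m → E) (v : E), Orthonormal ℝ F ∧ ‖v‖ = 1 ∧ (∀ j, ⟪F j, v⟫ = 0) ∧
        ∀ (co : Fin m → ℝ) (t : ℝ), 0 ≤ t → ∑ j, co j • F j + t • v ∈ S := by
  constructor
  · rintro ⟨W, v, hW, hv, hWv, hS⟩
    let b := (stdOrthonormalBasis ℝ W).reindex (finCongr hW)
    exact ⟨fun j => b j, v, b.orthonormal.comp_linearIsometry W.subtypeₗᵢ, hv,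
      fun j => hWv _ (b j).2,
      fun co t ht => hS ⟨_, W.sum_smul_mem _ fun j _ => (b j).2, t, ht, rfl⟩⟩
  · rintro ⟨F, v, hF, hv, hFv, hS⟩
    refine ⟨Submodule.span ℝ (range F), v, ?_, hv, fun w hw => ?_, ?_⟩
    · rw [finrank_span_eq_card hF.linearIndependent, Fintype.card_fin]
    · obtain ⟨co, rfl⟩ := (Submodule.mem_span_range_iff_exists_fun ℝ).1 hw
      simp [sum_inner, real_inner_smul_left, hFv]
    · rintro x ⟨w, hw, t, ht, rfl⟩
      obtain ⟨co, rfl⟩ := (Submodule.mem_span_range_iff_exists_fun ℝ).1 hw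
      exact hS co t ht

/-- Orthonormal frames form a compact set, so the condition can be projected out. -/
lemma isClosed_setOf_exists_orthonormal_halfspace [ProperSpace E] {A : Set E} {N : E → Set E}
    (hN : IsClosed {p : E × E | p.1 ∈ A ∧ p.2 ∈ N p.1}) (m : ℕ) :
    IsClosed {a | a ∈ A ∧ ∃ (F : Fin m → E) (v : E), Orthonormal ℝ F ∧ ‖v‖ = 1 ∧
      (∀ j, ⟪F j, v⟫ = 0) ∧ ∀ (co : Fin m → ℝ) (t : ℝ), 0 ≤ t → ∑ j, co j • F j + t • v ∈ N a} := by
  let S : Set (E × (Fin m → E) × E) := {q | Orthonormal ℝ q.2.1 ∧ ‖q.2.2‖ = 1 ∧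
    (∀ j, ⟪q.2.1 j, q.2.2⟫ = 0) ∧ ∀ (co : Fin m → ℝ) (t : ℝ), 0 ≤ t →
      (q.1, ∑ j, co j • q.2.1 j + t • q.2.2) ∈ {p : E × E | p.1 ∈ A ∧ p.2 ∈ N p.1}}
  have hset : {a | a ∈ A ∧ ∃ (F : Fin m → E) (v : E), Orthonormal ℝ F ∧ ‖v‖ = 1 ∧
      (∀ j, ⟪F j, v⟫ = 0) ∧ ∀ (co : Fin m → ℝ) (t : ℝ), 0 ≤ t → ∑ j, co j • F j + t • v ∈ N a} =
      {a | ∃ y ∈ (univ.pi fun _ => sphere (0 : E) 1) ×ˢ sphere (0 : E) 1, (a, y) ∈ S} := by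
    ext a
    constructor
    · rintro ⟨ha, F, v, hF, hv, hFv, hN⟩
      exact ⟨(F, v), ⟨fun j _ => by simpa using hF.1 j, by simpa using hv⟩, hF, hv, hFv,
        fun co t ht => ⟨ha, hN co t ht⟩⟩
    · rintro ⟨⟨F, v⟩, -, hF, hv, hFv, hN⟩
      exact ⟨(hN 0 0 le_rfl).1, F, v, hF, hv, hFv, fun co t ht => (hN co t ht).2⟩
  rw [hset]
  refine isClosed_setOf_exists_of_isCompact
    ((isCompact_univ_pi fun _ => isCompact_sphere _ _).prod (isCompact_sphere _ _)) ?_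
  simp only [S, orthonormal_iff_ite, ofPred_and, ofPred_forall] at hN ⊢
  refine (isClosed_iInter fun i => isClosed_iInter fun j => isClosed_eq (by fun_prop)
    continuous_const).inter ((isClosed_eq (by fun_prop) continuous_const).inter
      ((isClosed_iInter fun j => isClosed_eq (by fun_prop) continuous_const).inter
        (isClosed_iInter fun co => isClosed_iInter fun t => isClosed_iInter fun _ =>
          hN.preimage (by fun_prop))))

theorem stmt4_general {d : ℕ} (A : Set (EuclideanSpace ℝ (Fin d)))
    (hreach : 0 < setReach A) (k : ℕ) :
    IsClosed {a : EuclideanSpace ℝ (Fin d) | a ∈ A ∧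
      ∃ (W : Submodule ℝ (EuclideanSpace ℝ (Fin d))) (v : EuclideanSpace ℝ (Fin d)),
        Module.finrank ℝ W = k - 1 ∧ ‖v‖ = 1 ∧ (∀ w ∈ W, ⟪w, v⟫ = 0) ∧
        {x : EuclideanSpace ℝ (Fin d) | ∃ w ∈ W, ∃ t : ℝ, 0 ≤ t ∧ x = w + t • v}
          ⊆ Nor A a} := by
  rcases A.eq_empty_or_nonempty with rfl | hne
  · simp
  obtain ⟨r, hr, hU⟩ := exists_unpWithin_of_setReach_pos hreach hne
  simp_rw [exists_halfspace_subset_iff_exists_orthonormal]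
  exact isClosed_setOf_exists_orthonormal_halfspace (hU.isClosed_setOf_mem_nor hr) (k - 1)

/-- The set of points whose normal cone contains a k-dimensional halfspace is closed. -/
theorem stmt4 {d : ℕ} (A : Set (EuclideanSpace ℝ (Fin d)))
    (hreach : 0 < setReach A) (k : ℕ) (hk : 1 ≤ k) (hkd : k ≤ d) :
    IsClosed {a : EuclideanSpace ℝ (Fin d) | a ∈ A ∧
      ∃ (W : Submodule ℝ (EuclideanSpace ℝ (Fin d))) (v : EuclideanSpace ℝ (Fin d)),
        Module.finrank ℝ W = k - 1 ∧ ‖v‖ = 1 ∧ (∀ w ∈ W, ⟪w, v⟫ = 0) ∧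
        {x : EuclideanSpace ℝ (Fin d) | ∃ w ∈ W, ∃ t : ℝ, 0 ≤ t ∧ x = w + t • v}
          ⊆ Nor A a} :=
  stmt4_general A hreach k
end
end

section
/- Let X be a Banach space with X = E ⊕ K (topological direct sum), dim K < ∞, let Ω ⊆ X be open convex, f : Ω → ℝ continuous convex, L > 0, and α ∈ K*. Let A_{α,L} := {x ∈ Ω : there exists p_x in the subdifferential ∂f(x) with ‖p_x‖ ≤ L and p_x restricted to K equals α}. Then there exists a Lipschitz convex function g on E such that f(x) − α(π_K(x)) = g(π_E(x)) for each x ∈ A_{α,L}. -/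
/-!
Put `F := f - α ∘ πK`. A subgradient `q` of `f` at `y ∈ Ω` that agrees with `α` on `K` sees the
`K`-component of every increment only through `α`, so `e ↦ F y + q (e - πE y)` is an affine function
on `X` lying below `F x` at `e = πE x` for every `x ∈ Ω`, with equality at `x = y`. The supremum `g`
of these affine functions over all such pairs `(y, q)` with `‖q‖ ≤ L` is therefore convex,
`L`-Lipschitz, and equal to `F x` at `πE x` whenever `x ∈ A_{α,L}`.
-/

open Set
open scoped NNReal

section SupOfFamily

variable {ι α : Type*} {φ : ι → α → ℝ}

theorem bddAbove_range_of_lipschitzWith [PseudoMetricSpace α] {K : ℝ≥0}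
    (hφ : ∀ i, LipschitzWith K (φ i)) {x₀ : α} (hx₀ : BddAbove (range fun i => φ i x₀)) (x : α) :
    BddAbove (range fun i => φ i x) := by
  obtain ⟨B, hB⟩ := hx₀
  refine ⟨B + K * dist x x₀, forall_mem_range.2 fun i => ?_⟩
  exact ((hφ i).le_add_mul x x₀).trans (add_le_add_left (hB (mem_range_self i)) _)

theorem LipschitzWith.ciSup [Nonempty ι] [PseudoMetricSpace α] {K : ℝ≥0}
    (hφ : ∀ i, LipschitzWith K (φ i)) (hbdd : ∀ x, BddAbove (range fun i => φ i x)) :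
    LipschitzWith K fun x => ⨆ i, φ i x :=
  LipschitzWith.of_le_add_mul K fun x y => ciSup_le fun i =>
    ((hφ i).le_add_mul x y).trans (add_le_add_left (le_ciSup (hbdd y) i) _)

theorem ConvexOn.ciSup [Nonempty ι] [AddCommMonoid α] [Module ℝ α] {s : Set α}
    (hφ : ∀ i, ConvexOn ℝ s (φ i)) (hbdd : ∀ x ∈ s, BddAbove (range fun i => φ i x)) :
    ConvexOn ℝ s fun x => ⨆ i, φ i x := by
  refine ⟨(hφ (Classical.arbitrary ι)).1, fun x hx y hy a b ha hb hab => ciSup_le fun i => ?_⟩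
  calc φ i (a • x + b • y) ≤ a • φ i x + b • φ i y := (hφ i).2 hx hy ha hb hab
    _ ≤ a • (⨆ i, φ i x) + b • ⨆ i, φ i y := by
      gcongr
      exacts [le_ciSup (hbdd x hx) i, le_ciSup (hbdd y hy) i]

end SupOfFamily

theorem affine_le_sub_of_subgradient_eq_on {X : Type*} [AddCommGroup X] [Module ℝ X]
    {K : Submodule ℝ X} {πE πK : X → X} (hπK : ∀ x, πK x ∈ K) (hsum : ∀ x, πE x + πK x = x)
    {Ω : Set X} {f : X → ℝ} {α q : X →ₗ[ℝ] ℝ} {y : X}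
    (hq : ∀ z ∈ Ω, q (z - y) ≤ f z - f y) (hqα : ∀ v ∈ K, q v = α v) {x : X} (hx : x ∈ Ω) :
    f y - α (πK y) - q (πE y) + q (πE x) ≤ f x - α (πK x) := by
  have hsplit : q (x - y) = q (πE x) - q (πE y) + (α (πK x) - α (πK y)) := by
    rw [← map_sub, ← map_sub, ← hqα _ (sub_mem (hπK x) (hπK y)), ← map_add]
    congr 1
    conv_lhs => rw [← hsum x, ← hsum y]
    abel
  linarith [hq x hx]

theorem stmt7_general {X : Type*} [NormedAddCommGroup X] [NormedSpace ℝ X]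
    (K : Submodule ℝ X) (πE πK : X →L[ℝ] X)
    (hπK : ∀ x, πK x ∈ K) (hsum : ∀ x, πE x + πK x = x)
    (Ω : Set X) (f : X → ℝ) (L : ℝ) (α : X →L[ℝ] ℝ) :
    ∃ g : X → ℝ, ConvexOn ℝ univ g ∧ (∃ C : ℝ≥0, LipschitzWith C g) ∧
      ∀ x ∈ {x ∈ Ω | ∃ p : X →L[ℝ] ℝ, ‖p‖ ≤ L ∧
          (∀ y ∈ Ω, p (y - x) ≤ f y - f x) ∧ (∀ v ∈ K, p v = α v)},
        f x - α (πK x) = g (πE x) := by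
  let ι := {yq : X × (X →L[ℝ] ℝ) // yq.1 ∈ Ω ∧ ‖yq.2‖ ≤ L ∧
    (∀ z ∈ Ω, yq.2 (z - yq.1) ≤ f z - f yq.1) ∧ ∀ v ∈ K, yq.2 v = α v}
  rcases isEmpty_or_nonempty ι with hι | hι
  · exact ⟨0, convexOn_const 0 convex_univ, ⟨0, LipschitzWith.const 0⟩,
      fun x ⟨hx, p, hp⟩ => hι.elim ⟨(x, p), hx, hp⟩⟩
  let φ : ι → X → ℝ := fun i e => f i.1.1 - α (πK i.1.1) - i.1.2 (πE i.1.1) + i.1.2 e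
  have hφ_le : ∀ i, ∀ x ∈ Ω, φ i (πE x) ≤ f x - α (πK x) := fun i _ hx =>
    affine_le_sub_of_subgradient_eq_on (α := α.toLinearMap) (q := i.1.2.toLinearMap) hπK hsum
      i.2.2.2.1 i.2.2.2.2 hx
  have hφ_conv : ∀ i, ConvexOn ℝ univ (φ i) := fun i =>
    (convexOn_const _ convex_univ).add (i.1.2.toLinearMap.convexOn convex_univ)
  have hφ_lip : ∀ i, LipschitzWith L.toNNReal (φ i) := fun i =>
    ((LipschitzWith.const _).add i.1.2.lipschitz).weaken
      (by simpa using NNReal.le_toNNReal_of_coe_le i.2.2.1)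
  have hbdd : ∀ e, BddAbove (range fun i => φ i e) :=
    let i₀ := Classical.arbitrary ι
    bddAbove_range_of_lipschitzWith hφ_lip (x₀ := πE i₀.1.1)
      ⟨_, forall_mem_range.2 fun i => hφ_le i i₀.1.1 i₀.2.1⟩
  refine ⟨fun e => ⨆ i, φ i e,
    ConvexOn.ciSup hφ_conv fun e _ => hbdd e,
    ⟨_, LipschitzWith.ciSup hφ_lip hbdd⟩, ?_⟩
  rintro x ⟨hx, p, hp⟩
  refine le_antisymm ?_ (ciSup_le fun i => hφ_le i x hx)
  exact le_ciSup_of_le (hbdd _) ⟨(x, p), hx, hp⟩ (by simp [φ])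

/-- Projection lemma for convex functions with a fixed partial subgradient. -/
theorem stmt7 {X : Type*} [NormedAddCommGroup X] [NormedSpace ℝ X] [CompleteSpace X]
    (E K : Submodule ℝ X) (hEK : IsCompl E K) [FiniteDimensional ℝ K]
    (πE πK : X →L[ℝ] X)
    (hπE : ∀ x, πE x ∈ E) (hπK : ∀ x, πK x ∈ K) (hsum : ∀ x, πE x + πK x = x)
    (Ω : Set X) (hΩopen : IsOpen Ω) (hΩconv : Convex ℝ Ω)
    (f : X → ℝ) (hf : ConvexOn ℝ Ω f) (hfc : ContinuousOn f Ω)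
    (L : ℝ) (hL : 0 < L) (α : X →L[ℝ] ℝ) :
    ∃ g : X → ℝ, ConvexOn ℝ univ g ∧ (∃ C : ℝ≥0, LipschitzWith C g) ∧
      ∀ x ∈ {x ∈ Ω | ∃ p : X →L[ℝ] ℝ, ‖p‖ ≤ L ∧
          (∀ y ∈ Ω, p (y - x) ≤ f y - f x) ∧ (∀ v ∈ K, p v = α v)},
        f x - α (πK x) = g (πE x) :=
  stmt7_general K πE πK hπK hsum Ω f L α
end

section
/- Let A ⊆ ℝ^d be a closed set such that: (i) there exists L > 0 such that A is the image of an injective arc-length parametrization γ : I → ℝ^d of class C^{1,1} with parameter L, where I ⊆ ℝ is a closed interval; and (ii) for every ε > 0 there is δ > 0 with: x, y ∈ A and |x − y| < δ imply d_A(x, y) < ε, where d_A is the intrinsic (geodesic) distance in A. Then reach A ≥ min{δ₀/2, 1/(8L)}, where δ₀ is a δ corresponding to ε = 1/(2L) in (ii). -/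
open Metric Set Filter
open scoped ENNReal RealInnerProductSpace Topology NNReal

noncomputable section

variable {E : Type*} [NormedAddCommGroup E] [InnerProductSpace ℝ E]

/-!
Let `x` be within `min (δ₀ / 2) (1 / (8 L))` of `A` and let `γ s`, `γ t` be two nearest points of
`x` in `A`. They are within `δ₀` of each other, hence joined by a path in `A` of length
`< 1 / (2 L)`. Lifting this path through `γ` keeps the parameter within `3 / (5 L)` of `s`: by the
chord estimate `‖γ v - γ u‖ ≥ 47 / 50 * |v - u|` for `|v - u| ≤ 3 / (5 L)`, the lifted parameter
never gets close to the boundary of that window, and it can only jump at points of `A` that are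
limits of `γ u` with `|u| → ∞`. Baire's theorem, applied with hypothesis (ii) for all `ε`, shows
that `A` contains no such point. Finally `x - γ s` is normal to the curve at `γ s`, and `x` is
equidistant from `γ s` and `γ t`, so Taylor's formula gives
`‖γ t - γ s‖² / 2 = ⟪x - γ s, γ t - γ s⟫ ≤ ‖x - γ s‖ L (t - s)² < (t - s)² / 8`, which
contradicts the chord estimate unless `s = t`.
-/

section LimitSet

variable {X : Type*} [TopologicalSpace X]

def limitSetAtInfinity (I : Set ℝ) (γ : ℝ → X) : Set X :=
  ⋂ R : ℝ, closure (γ '' {u ∈ I | R < |u|})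

theorem isClosed_limitSetAtInfinity (I : Set ℝ) (γ : ℝ → X) :
    IsClosed (limitSetAtInfinity I γ) :=
  isClosed_iInter fun _ => isClosed_closure

/-- Away from its limit set at infinity, a continuous injective curve on a closed parameter set
is a homeomorphism onto its image. -/
theorem eventually_mem_image_inter_of_notMem_limitSetAtInfinity [T2Space X] {I : Set ℝ}
    {γ : ℝ → X} (hI : IsClosed I) (hγ : ContinuousOn γ I) (hinj : InjOn γ I) {u : ℝ}
    (hu : u ∈ I) (hlim : γ u ∉ limitSetAtInfinity I γ) {V : Set ℝ} (hV : V ∈ 𝓝 u) :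
    ∀ᶠ z in 𝓝 (γ u), z ∈ γ '' I → z ∈ γ '' (I ∩ V) := by
  obtain ⟨R, hR⟩ : ∃ R, γ u ∉ closure (γ '' {w ∈ I | R < |w|}) := by
    simpa [limitSetAtInfinity] using hlim
  set K := I ∩ Icc (-R) R ∩ (interior V)ᶜ
  have hKI : K ⊆ I := fun w hw => hw.1.1
  have hK : IsCompact K :=
    isCompact_Icc.of_isClosed_subset ((hI.inter isClosed_Icc).inter isOpen_interior.isClosed_compl)
      fun w hw => hw.1.2
  have huK : γ u ∉ γ '' K := by
    rintro ⟨w, hwK, hw⟩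
    exact hwK.2 (hinj (hKI hwK) hu hw ▸ mem_interior_iff_mem_nhds.2 hV)
  filter_upwards [isClosed_closure.isOpen_compl.mem_nhds hR,
    (hK.image_of_continuousOn (hγ.mono hKI)).isClosed.isOpen_compl.mem_nhds huK]
    with z hzfar hzK
  rintro ⟨w, hwI, rfl⟩
  have hwR : |w| ≤ R := not_lt.1 fun h => hzfar (subset_closure ⟨w, ⟨hwI, h⟩, rfl⟩)
  by_contra hwV
  exact hzK ⟨w, ⟨⟨hwI, abs_le.1 hwR⟩, fun h => hwV ⟨w, ⟨hwI, interior_subset h⟩, rfl⟩⟩, rfl⟩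

end LimitSet

/-- `d_A(x, y) < ε` for the intrinsic distance `d_A` of `A`. -/
def JoinedInLengthLT {X : Type*} [PseudoEMetricSpace X] (A : Set X) (ε : ℝ) (x y : X) : Prop :=
  ∃ g : ℝ → X, ContinuousOn g (Icc 0 1) ∧ g 0 = x ∧ g 1 = y ∧ g '' Icc 0 1 ⊆ A ∧
    eVariationOn g (Icc 0 1) < ENNReal.ofReal ε

theorem dist_lt_of_eVariationOn_lt {X : Type*} [PseudoMetricSpace X] {g : ℝ → X} {s : Set ℝ}
    {ε : ℝ} (h : eVariationOn g s < ENNReal.ofReal ε) {a b : ℝ} (ha : a ∈ s) (hb : b ∈ s) :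
    dist (g a) (g b) < ε :=
  edist_lt_ofReal.1 ((eVariationOn.edist_le g ha hb).trans_lt h)

theorem IsClosed.exists_inter_ball_subset_of_subset_iUnion {X : Type*} [PseudoMetricSpace X]
    [CompleteSpace X] {F : Set X} (hF : IsClosed F) (hne : F.Nonempty) {C : ℕ → Set X}
    (hC : ∀ n, IsClosed (C n)) (hcover : F ⊆ ⋃ n, C n) :
    ∃ n, ∃ z ∈ F, ∃ σ > 0, F ∩ ball z σ ⊆ C n := by
  have := hF.completeSpace_coe
  have := hne.to_subtype
  obtain ⟨n, z, hz⟩ := nonempty_interior_of_iUnion_of_closed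
    (f := fun n => ((↑) : F → X) ⁻¹' C n) (fun n => (hC n).preimage continuous_subtype_val)
    (eq_univ_of_forall fun y => by simpa using hcover y.2)
  obtain ⟨σ, hσ, hball⟩ := Metric.isOpen_iff.1 isOpen_interior z hz
  exact ⟨n, z, z.2, σ, hσ, fun y ⟨hyF, hyz⟩ =>
    interior_subset (s := ((↑) : F → X) ⁻¹' C n)
      (hball (show (⟨y, hyF⟩ : F) ∈ ball z σ from hyz))⟩

theorem ofReal_le_setReach {X : Type*} [NormedAddCommGroup X] {A : Set X} {r : ℝ}
    (h : ∀ a ∈ A, ∀ x, dist x a < r → UnpPt A x) :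
    ENNReal.ofReal r ≤ setReach A :=
  le_iInf₂ fun a ha => le_iSup₂_of_le r.toNNReal (fun x hx => h a ha x <|
    (lt_max_iff.1 (Real.coe_toNNReal' r ▸ hx)).resolve_right dist_nonneg.not_gt) le_rfl

structure IsArcLengthC11 (I : Set ℝ) (γ γ' : ℝ → E) (L : ℝ) : Prop where
  ordConnected : I.OrdConnected
  hasDerivWithinAt : ∀ t ∈ I, HasDerivWithinAt γ (γ' t) I t
  norm_deriv : ∀ t ∈ I, ‖γ' t‖ = 1
  lipschitzOnWith : LipschitzOnWith (Real.toNNReal L) γ' I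

namespace IsArcLengthC11

variable {I : Set ℝ} {γ γ' : ℝ → E} {L : ℝ}

theorem continuousOn (hγ : IsArcLengthC11 I γ γ' L) : ContinuousOn γ I :=
  fun t ht => (hγ.hasDerivWithinAt t ht).continuousWithinAt

theorem norm_deriv_sub_le (hγ : IsArcLengthC11 I γ γ' L) (hL : 0 ≤ L) {u v : ℝ}
    (hu : u ∈ I) (hv : v ∈ I) : ‖γ' v - γ' u‖ ≤ L * |v - u| := by
  simpa [dist_eq_norm, Real.dist_eq, Real.coe_toNNReal L hL] using
    hγ.lipschitzOnWith.dist_le_mul v hv u hu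

theorem norm_sub_sub_smul_le (hγ : IsArcLengthC11 I γ γ' L) (hL : 0 ≤ L) {u v : ℝ}
    (hu : u ∈ I) (hv : v ∈ I) (huv : u ≤ v) :
    ‖γ v - γ u - (v - u) • γ' u‖ ≤ L * (v - u) ^ 2 := by
  have hsub : Icc u v ⊆ I := hγ.ordConnected.out hu hv
  have hderiv : ∀ w ∈ Icc u v,
      HasDerivWithinAt (fun w => γ w - w • γ' u) (γ' w - γ' u) (Icc u v) w := fun w hw => by
    convert ((hγ.hasDerivWithinAt w (hsub hw)).mono hsub).sub
      ((hasDerivWithinAt_id w _).smul_const (γ' u)) using 1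
    · rfl
    · rw [one_smul]
  have hbound : ∀ w ∈ Icc u v, ‖γ' w - γ' u‖ ≤ L * (v - u) := fun w hw => by
    refine (hγ.norm_deriv_sub_le hL hu (hsub hw)).trans (mul_le_mul_of_nonneg_left ?_ hL)
    rw [abs_of_nonneg (sub_nonneg.2 hw.1)]
    linarith [hw.2]
  have h := Convex.norm_image_sub_le_of_norm_hasDerivWithin_le hderiv hbound (convex_Icc u v)
    (left_mem_Icc.2 huv) (right_mem_Icc.2 huv)
  rw [Real.norm_eq_abs, abs_of_nonneg (sub_nonneg.2 huv)] at h
  calc ‖γ v - γ u - (v - u) • γ' u‖ = ‖γ v - v • γ' u - (γ u - u • γ' u)‖ := by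
        rw [sub_smul]; congr 1; abel
    _ ≤ L * (v - u) ^ 2 := by linarith

theorem one_sub_le_inner_deriv (hγ : IsArcLengthC11 I γ γ' L) (hL : 0 ≤ L) {u v : ℝ}
    (hu : u ∈ I) (hv : v ∈ I) : 1 - L ^ 2 * (v - u) ^ 2 / 2 ≤ ⟪γ' u, γ' v⟫ := by
  have hsq := norm_sub_sq_real (γ' v) (γ' u)
  rw [hγ.norm_deriv v hv, hγ.norm_deriv u hu, real_inner_comm] at hsq
  have hle : ‖γ' v - γ' u‖ ^ 2 ≤ (L * |v - u|) ^ 2 :=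
    pow_le_pow_left₀ (norm_nonneg _) (hγ.norm_deriv_sub_le hL hu hv) 2
  rw [mul_pow, sq_abs] at hle
  linarith

/-- `w ↦ ⟪γ' u, γ w - γ u⟫ - (w - u) + L² (w - u)³ / 6` is nondecreasing, since
`⟪γ' u, γ' w⟫ ≥ 1 - L² (w - u)² / 2`. -/
theorem sub_sub_cube_le_norm_sub (hγ : IsArcLengthC11 I γ γ' L) (hL : 0 ≤ L) {u v : ℝ}
    (hu : u ∈ I) (hv : v ∈ I) (huv : u ≤ v) :
    (v - u) - L ^ 2 * (v - u) ^ 3 / 6 ≤ ‖γ v - γ u‖ := by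
  have hsub : Icc u v ⊆ I := hγ.ordConnected.out hu hv
  set f : ℝ → ℝ := fun w => ⟪γ' u, γ w - γ u⟫ - (w - u) + L ^ 2 / 6 * (w - u) ^ 3 with hf
  set D := interior (Icc u v)
  have hderiv : ∀ w ∈ D, HasDerivWithinAt f
      (⟪γ' u, γ' w⟫ - 1 + L ^ 2 * (w - u) ^ 2 / 2) D w := fun w hw => by
    have hγw := (hγ.hasDerivWithinAt w (hsub (interior_subset hw))).mono
      (interior_subset.trans hsub)
    have hinner := (hasDerivWithinAt_const w D (γ' u)).inner ℝ (hγw.sub_const (γ u))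
    have hlin := (hasDerivWithinAt_id w D).sub_const u
    have h := (hinner.sub hlin).add ((hlin.pow 3).const_mul (L ^ 2 / 6))
    simp only [inner_zero_left, add_zero, id] at h
    exact h.congr_deriv (by push_cast; ring)
  have hmono : MonotoneOn f (Icc u v) := by
    refine monotoneOn_of_hasDerivWithinAt_nonneg (convex_Icc u v) ?_ hderiv fun w hw => ?_
    · have := hγ.continuousOn.mono hsub
      fun_prop
    · have := hγ.one_sub_le_inner_deriv hL hu (hsub (interior_subset hw))
      linarith
  have hfuv := hmono (left_mem_Icc.2 huv) (right_mem_Icc.2 huv) huv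
  have hcs : ⟪γ' u, γ v - γ u⟫ ≤ ‖γ v - γ u‖ := by
    simpa [hγ.norm_deriv u hu] using real_inner_le_norm (γ' u) (γ v - γ u)
  simp only [hf, sub_self, inner_zero_right] at hfuv
  linarith

theorem mul_abs_sub_le_norm_sub (hγ : IsArcLengthC11 I γ γ' L) (hL : 0 < L) {u v : ℝ}
    (hu : u ∈ I) (hv : v ∈ I) (huv : |v - u| ≤ 3 / (5 * L)) :
    47 / 50 * |v - u| ≤ ‖γ v - γ u‖ := by
  wlog h : u ≤ v generalizing u v
  · rw [abs_sub_comm, norm_sub_rev]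
    exact this hv hu (by rwa [abs_sub_comm]) (le_of_not_ge h)
  rw [abs_of_nonneg (sub_nonneg.2 h)] at huv ⊢
  have hLd : L * (v - u) ≤ 3 / 5 := by
    rw [le_div_iff₀ (by positivity)] at huv
    linarith
  have hcube : L ^ 2 * (v - u) ^ 3 ≤ 9 / 25 * (v - u) := by
    have := mul_le_mul hLd hLd (by positivity) (by norm_num)
    nlinarith [mul_le_mul_of_nonneg_right this (sub_nonneg.2 h)]
  linarith [hγ.sub_sub_cube_le_norm_sub hL.le hu hv h]

/-- Continuous induction on `[0, 1]`: the times at which the path lies over the parameter window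
`|u - s| ≤ 3 / (5 L)` form a closed set, which is also open except at points of the limit set
at infinity. -/
theorem abs_sub_le_or_exists_mem_limitSetAtInfinity (hγ : IsArcLengthC11 I γ γ' L) (hL : 0 < L)
    (hI : IsClosed I) (hinj : InjOn γ I) {s t : ℝ} (hs : s ∈ I) (ht : t ∈ I) {ε : ℝ}
    (hε : ε ≤ 1 / (2 * L)) (hst : JoinedInLengthLT (γ '' I) ε (γ s) (γ t)) :
    |t - s| ≤ 3 / (5 * L) ∨ ∃ u ∈ I, |u - s| ≤ 3 / (5 * L) ∧ dist (γ u) (γ t) < ε ∧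
      γ u ∈ limitSetAtInfinity I γ := by
  obtain ⟨g, hg, hg0, hg1, hgI, hvar⟩ := hst
  set W := 3 / (5 * L)
  set K := I ∩ closedBall s W
  have h01 : (0 : ℝ) ∈ Icc 0 1 := left_mem_Icc.2 zero_le_one
  have h11 : (1 : ℝ) ∈ Icc 0 1 := right_mem_Icc.2 zero_le_one
  -- `W - 16 / (235 L) = 25 / (47 L)`: the chord estimate leaves a gap between the window and
  -- the parameters the path can reach
  have hgap : ∀ τ ∈ Icc (0 : ℝ) 1, ∀ u ∈ K, γ u = g τ → dist u s < W - 16 / (235 * L) := by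
    rintro τ hτ u ⟨hu, hus⟩ hγu
    rw [mem_closedBall, Real.dist_eq] at hus
    rw [Real.dist_eq]
    have hchord := hγ.mul_abs_sub_le_norm_sub hL hs hu hus
    have hdist := dist_lt_of_eVariationOn_lt hvar hτ h01
    rw [← hγu, hg0, dist_eq_norm] at hdist
    have hW : W - 16 / (235 * L) = 50 / 47 * (1 / (2 * L)) := by simp only [W]; field_simp; ring
    linarith
  by_contra! hcon
  obtain ⟨hfar, hnolim⟩ := hcon
  have hN : Icc 0 1 ⊆ g ⁻¹' (γ '' K) := by
    refine IsClosed.Icc_subset_of_forall_mem_nhdsWithin ?_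
      ⟨s, ⟨hs, mem_closedBall_self (by positivity)⟩, hg0.symm⟩ ?_
    · have hK : IsCompact K := (isCompact_closedBall s W).inter_left hI
      rw [inter_comm]
      exact hg.preimage_isClosed_of_isClosed isClosed_Icc
        (hK.image_of_continuousOn (hγ.continuousOn.mono inter_subset_left)).isClosed
    · rintro τ ⟨⟨u, hu, hγu⟩, hτ⟩
      have hτ' : τ ∈ Icc (0 : ℝ) 1 := Ico_subset_Icc_self hτ
      have hus := hgap τ hτ' u hu hγu
      have hlim : γ u ∉ limitSetAtInfinity I γ := hnolim u hu.1 hu.2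
        (by rw [hγu, ← hg1]; exact dist_lt_of_eVariationOn_lt hvar hτ' h11)
      have hev := eventually_mem_image_inter_of_notMem_limitSetAtInfinity hI hγ.continuousOn
        hinj hu.1 hlim (ball_mem_nhds u (by positivity : (0 : ℝ) < 16 / (235 * L)))
      rw [hγu] at hev
      have hle : 𝓝[>] τ ≤ 𝓝[Icc 0 1] τ := nhdsWithin_le_of_mem (Icc_mem_nhdsGT_of_mem hτ)
      filter_upwards [hle ((hg τ hτ').eventually hev), hle self_mem_nhdsWithin] with τ' h h'
      obtain ⟨u', ⟨hu', hu'u⟩, hγu'⟩ := h (hgI ⟨τ', h', rfl⟩)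
      refine ⟨u', ⟨hu', ?_⟩, hγu'⟩
      rw [mem_ball] at hu'u
      rw [mem_closedBall]
      linarith [dist_triangle u' u s]
  obtain ⟨u, ⟨hu, hus⟩, hγu⟩ := hN h11
  rw [hg1] at hγu
  rw [hinj hu ht hγu, mem_closedBall, Real.dist_eq] at hus
  exact hfar.not_ge hus

/-- Baire's theorem on the closed set of points of the curve lying in its limit set at infinity
yields such a point `z` near which all of them have parameters in `[-n, n]`. A short path from
a far point of the curve close to `z` back to `z` would have to lift within the parameter window
around the far point, or jump at a point of the limit set near `z`; both are impossible. -/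
theorem notMem_limitSetAtInfinity [CompleteSpace E] (hγ : IsArcLengthC11 I γ γ' L) (hL : 0 < L)
    (hI : IsClosed I) (hinj : InjOn γ I) (hA : IsClosed (γ '' I))
    (hpath : ∀ ε > (0 : ℝ), ∃ δ > (0 : ℝ), ∀ x ∈ γ '' I, ∀ y ∈ γ '' I, dist x y < δ →
      JoinedInLengthLT (γ '' I) ε x y) {u : ℝ} (hu : u ∈ I) :
    γ u ∉ limitSetAtInfinity I γ := by
  intro hlim
  set F := γ '' I ∩ limitSetAtInfinity I γ
  have hbounded : ∀ n : ℕ, IsCompact (I ∩ Icc (-(n : ℝ)) n) := fun n =>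
    isCompact_Icc.of_isClosed_subset (hI.inter isClosed_Icc) inter_subset_right
  obtain ⟨n, _, ⟨⟨u₀, hu₀, rfl⟩, hu₀lim⟩, σ, hσ, hball⟩ :=
    (hA.inter (isClosed_limitSetAtInfinity I γ)).exists_inter_ball_subset_of_subset_iUnion
      ⟨γ u, mem_image_of_mem γ hu, hlim⟩
      (C := fun n : ℕ => γ '' (I ∩ Icc (-(n : ℝ)) n))
      (fun n => ((hbounded n).image_of_continuousOn
        (hγ.continuousOn.mono inter_subset_left)).isClosed)
      (fun _ ⟨⟨w, hw, hγw⟩, _⟩ => mem_iUnion.2 ⟨⌈|w|⌉₊, w, ⟨hw, abs_le.1 (Nat.le_ceil _)⟩, hγw⟩)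
  have hsmall : ∀ w ∈ I, γ w ∈ F → dist (γ w) (γ u₀) < σ → |w| ≤ n := by
    intro w hw hwF hwσ
    obtain ⟨w', ⟨hw', hw'n⟩, hγw'⟩ := hball ⟨hwF, hwσ⟩
    exact hinj hw' hw hγw' ▸ abs_le.2 hw'n
  have hu₀n : |u₀| ≤ n := hsmall u₀ hu₀ ⟨mem_image_of_mem γ hu₀, hu₀lim⟩ (by simpa using hσ)
  obtain ⟨δ, hδ, hδpath⟩ := hpath (min σ (1 / (2 * L))) (by positivity)
  obtain ⟨_, ⟨w, ⟨hw, hwfar⟩, rfl⟩, hwδ⟩ :=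
    Metric.mem_closure_iff.1 (mem_iInter.1 hu₀lim (n + 1 / L)) δ hδ
  have hW : 3 / (5 * L) < 1 / L := by
    rw [div_lt_div_iff₀ (by positivity) hL]
    linarith
  rcases hγ.abs_sub_le_or_exists_mem_limitSetAtInfinity hL hI hinj hw hu₀ (min_le_right _ _)
    (hδpath _ (mem_image_of_mem γ hw) _ (mem_image_of_mem γ hu₀) (by rwa [dist_comm])) with
    hclose | ⟨v, hv, hvw, hvσ, hvlim⟩
  · linarith [abs_sub_abs_le_abs_sub w u₀, abs_sub_comm u₀ w]
  · have := hsmall v hv ⟨mem_image_of_mem γ hv, hvlim⟩ (hvσ.trans_le (min_le_left _ _))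
    linarith [abs_sub_abs_le_abs_sub w v, abs_sub_comm v w]

theorem abs_sub_le_of_joinedInLengthLT [CompleteSpace E] (hγ : IsArcLengthC11 I γ γ' L)
    (hL : 0 < L) (hI : IsClosed I) (hinj : InjOn γ I) (hA : IsClosed (γ '' I))
    (hpath : ∀ ε > (0 : ℝ), ∃ δ > (0 : ℝ), ∀ x ∈ γ '' I, ∀ y ∈ γ '' I, dist x y < δ →
      JoinedInLengthLT (γ '' I) ε x y) {s t : ℝ} (hs : s ∈ I) (ht : t ∈ I)
    (hst : JoinedInLengthLT (γ '' I) (1 / (2 * L)) (γ s) (γ t)) :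
    |t - s| ≤ 3 / (5 * L) :=
  (hγ.abs_sub_le_or_exists_mem_limitSetAtInfinity hL hI hinj hs ht le_rfl hst).resolve_right
    fun ⟨_, hu, _, _, hlim⟩ => hγ.notMem_limitSetAtInfinity hL hI hinj hA hpath hu hlim

/-- First-order optimality of `u ↦ ‖γ u - x‖²` at `s`, in the direction `t - s` of the positive
tangent cone of `I`. -/
theorem inner_sub_deriv_nonpos (hγ : IsArcLengthC11 I γ γ' L) {x : E} {s t : ℝ} (hs : s ∈ I)
    (ht : t ∈ I) (hst : s < t) (hmin : ∀ u ∈ I, dist x (γ s) ≤ dist x (γ u)) :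
    ⟪x - γ s, γ' s⟫ ≤ 0 := by
  have hlocmin : IsLocalMinOn (fun u => ‖γ u - x‖ ^ 2) I s :=
    IsMinOn.localize fun u hu => by
      simpa [← dist_eq_norm, dist_comm] using pow_le_pow_left₀ dist_nonneg (hmin u hu) 2
  have htan : t - s ∈ posTangentConeAt I s :=
    sub_mem_posTangentConeAt_of_segment_subset
      ((segment_eq_Icc hst.le).trans_subset (hγ.ordConnected.out hs ht))
  have := hlocmin.hasFDerivWithinAt_nonneg
    ((hγ.hasDerivWithinAt s hs).sub_const x).norm_sq.hasFDerivWithinAt htan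
  rw [ContinuousLinearMap.toSpanSingleton_apply, smul_eq_mul] at this
  rw [← neg_sub, inner_neg_left]
  nlinarith

theorem eq_of_dist_eq_of_forall_dist_le (hγ : IsArcLengthC11 I γ γ' L) (hL : 0 < L) {x : E}
    {s t : ℝ} (hs : s ∈ I) (ht : t ∈ I) (hst : |t - s| ≤ 3 / (5 * L))
    (hmin : ∀ u ∈ I, dist x (γ s) ≤ dist x (γ u)) (heq : dist x (γ t) = dist x (γ s))
    (hx : dist x (γ s) < 1 / (8 * L)) : s = t := by
  wlog h : s < t generalizing s t
  · rcases (not_lt.1 h).lt_or_eq with h | h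
    · exact (this ht hs (by rwa [abs_sub_comm]) (fun u hu => heq ▸ hmin u hu) heq.symm
        (heq ▸ hx) h).symm
    · exact h.symm
  exfalso
  set e := γ t - γ s - (t - s) • γ' s
  have hchord := hγ.mul_abs_sub_le_norm_sub hL hs ht hst
  rw [abs_of_pos (sub_pos.2 h)] at hchord
  have he : ‖e‖ ≤ L * (t - s) ^ 2 := hγ.norm_sub_sub_smul_le hL.le hs ht h.le
  have hbisect : ‖γ t - γ s‖ ^ 2 / 2 = ⟪x - γ s, γ t - γ s⟫ := by
    have h2 := norm_sub_sq_real (x - γ s) (γ t - γ s)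
    rw [sub_sub_sub_cancel_right, ← dist_eq_norm, ← dist_eq_norm, heq] at h2
    linarith
  have hxL : ‖x - γ s‖ * L < 1 / 8 := by
    rw [← dist_eq_norm]
    calc dist x (γ s) * L < 1 / (8 * L) * L := by gcongr
      _ = 1 / 8 := by field_simp
  have := mul_le_mul hchord hchord (by positivity) (norm_nonneg _)
  refine lt_irrefl ((47 / 50 * (t - s)) ^ 2 / 2) ?_
  calc (47 / 50 * (t - s)) ^ 2 / 2 ≤ ‖γ t - γ s‖ ^ 2 / 2 := by nlinarith
    _ = (t - s) * ⟪x - γ s, γ' s⟫ + ⟪x - γ s, e⟫ := by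
        rw [hbisect, ← real_inner_smul_right, ← inner_add_right]
        simp only [e, add_sub_cancel]
    _ ≤ ‖x - γ s‖ * (L * (t - s) ^ 2) := by
        have := hγ.inner_sub_deriv_nonpos hs ht h hmin
        nlinarith [real_inner_le_norm (x - γ s) e,
          mul_le_mul_of_nonneg_left he (norm_nonneg (x - γ s))]
    _ < (47 / 50 * (t - s)) ^ 2 / 2 := by nlinarith [pow_pos (sub_pos.2 h) 2]

end IsArcLengthC11

theorem stmt16_general {d : ℕ} (A : Set (EuclideanSpace ℝ (Fin d))) (hA : IsClosed A)
    (I : Set ℝ) (hIint : I.OrdConnected) (hIcl : IsClosed I)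
    (γ γ' : ℝ → EuclideanSpace ℝ (Fin d)) (L : ℝ) (hL : 0 < L)
    (hinj : InjOn γ I) (himg : γ '' I = A)
    (hderiv : ∀ t ∈ I, HasDerivWithinAt γ (γ' t) I t)
    (hnorm : ∀ t ∈ I, ‖γ' t‖ = 1)
    (hlipγ' : LipschitzOnWith (Real.toNNReal L) γ' I)
    (hii : ∀ ε > (0:ℝ), ∃ δ > (0:ℝ), ∀ x ∈ A, ∀ y ∈ A, dist x y < δ →
      ∃ g : ℝ → EuclideanSpace ℝ (Fin d), ContinuousOn g (Icc 0 1) ∧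
        g 0 = x ∧ g 1 = y ∧ g '' Icc 0 1 ⊆ A ∧
        eVariationOn g (Icc 0 1) < ENNReal.ofReal ε)
    (δ₀ : ℝ)
    (hδ₀prop : ∀ x ∈ A, ∀ y ∈ A, dist x y < δ₀ →
      ∃ g : ℝ → EuclideanSpace ℝ (Fin d), ContinuousOn g (Icc 0 1) ∧
        g 0 = x ∧ g 1 = y ∧ g '' Icc 0 1 ⊆ A ∧
        eVariationOn g (Icc 0 1) < ENNReal.ofReal (1 / (2 * L))) :
    ENNReal.ofReal (min (δ₀ / 2) (1 / (8 * L))) ≤ setReach A := by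
  subst himg
  have hγ : IsArcLengthC11 I γ γ' L := ⟨hIint, hderiv, hnorm, hlipγ'⟩
  refine ofReal_le_setReach fun a ha x hxa => ?_
  have hx : infDist x (γ '' I) < min (δ₀ / 2) (1 / (8 * L)) :=
    (infDist_le_dist_of_mem ha).trans_lt hxa
  obtain ⟨_, ⟨s, hs, rfl⟩, hxs⟩ := hA.exists_infDist_eq_dist ⟨a, ha⟩ x
  refine ⟨γ s, ⟨mem_image_of_mem γ hs, hxs.symm⟩, ?_⟩
  rintro _ ⟨⟨t, ht, rfl⟩, hxt⟩
  have hmin : ∀ u ∈ I, dist x (γ s) ≤ dist x (γ u) := fun u hu =>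
    hxs ▸ infDist_le_dist_of_mem (mem_image_of_mem γ hu)
  have hclose : dist (γ s) (γ t) < δ₀ := by
    linarith [dist_triangle_left (γ s) (γ t) x, min_le_left (δ₀ / 2) (1 / (8 * L))]
  have hst := hγ.abs_sub_le_of_joinedInLengthLT hL hIcl hinj hA hii hs ht
    (hδ₀prop _ (mem_image_of_mem γ hs) _ (mem_image_of_mem γ ht) hclose)
  rw [hγ.eq_of_dist_eq_of_forall_dist_le hL hs ht hst hmin (hxt.trans hxs)
    ((hxs ▸ hx).trans_le (min_le_right _ _))]

/-- A closed simple C^{1,1} curve (image of an injective arc-length parametrization with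
L-Lipschitz derivative) whose intrinsic distance is uniformly controlled by the Euclidean
distance has reach at least min(δ₀/2, 1/(8L)). -/
theorem stmt16 {d : ℕ} (A : Set (EuclideanSpace ℝ (Fin d))) (hA : IsClosed A)
    (I : Set ℝ) (hIint : I.OrdConnected) (hIcl : IsClosed I)
    (γ γ' : ℝ → EuclideanSpace ℝ (Fin d)) (L : ℝ) (hL : 0 < L)
    (hinj : InjOn γ I) (himg : γ '' I = A)
    (hderiv : ∀ t ∈ I, HasDerivWithinAt γ (γ' t) I t)
    (hnorm : ∀ t ∈ I, ‖γ' t‖ = 1)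
    (hlipγ' : LipschitzOnWith (Real.toNNReal L) γ' I)
    (hii : ∀ ε > (0:ℝ), ∃ δ > (0:ℝ), ∀ x ∈ A, ∀ y ∈ A, dist x y < δ →
      ∃ g : ℝ → EuclideanSpace ℝ (Fin d), ContinuousOn g (Icc 0 1) ∧
        g 0 = x ∧ g 1 = y ∧ g '' Icc 0 1 ⊆ A ∧
        eVariationOn g (Icc 0 1) < ENNReal.ofReal ε)
    (δ₀ : ℝ) (hδ₀ : 0 < δ₀)
    (hδ₀prop : ∀ x ∈ A, ∀ y ∈ A, dist x y < δ₀ →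
      ∃ g : ℝ → EuclideanSpace ℝ (Fin d), ContinuousOn g (Icc 0 1) ∧
        g 0 = x ∧ g 1 = y ∧ g '' Icc 0 1 ⊆ A ∧
        eVariationOn g (Icc 0 1) < ENNReal.ofReal (1 / (2 * L))) :
    ENNReal.ofReal (min (δ₀ / 2) (1 / (8 * L))) ≤ setReach A :=
  stmt16_general A hA I hIint hIcl γ γ' L hL hinj himg hderiv hnorm hlipγ' hii δ₀ hδ₀prop
end
end
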